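/- arXiv:2201.08774 — 2 statements merged into one kernel-verified Lean document; each statement's English description precedes it below -/
import Mathlib

section
/- If a set Y of women pushed up by man m contains at least one woman w' whose individual push-up causes m regret (w' ∈ W^R), then pushing up Y also causes m regret: μ(m) >_m μ^Y(m). -/
/-- A stable marriage profile: `M m` is man `m`'s ranking of women
(`M m k` = his `k`-th favorite woman), `W w` is woman `w`'s ranking of men. -/
structure Profile (n : ℕ) where
  M : Fin n → (Fin n ≃ Fin n)
  W : Fin n → (Fin n ≃ Fin n)

/-- Man `m` strictly prefers woman `w₁` to woman `w₂`. -/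
def Profile.mpref {n : ℕ} (P : Profile n) (m w₁ w₂ : Fin n) : Prop :=
  (P.M m).symm w₁ < (P.M m).symm w₂

/-- Woman `w` strictly prefers man `m₁` to man `m₂`. -/
def Profile.wpref {n : ℕ} (P : Profile n) (w m₁ m₂ : Fin n) : Prop :=
  (P.W w).symm m₁ < (P.W w).symm m₂

/-- State of the Gale–Shapley (deferred acceptance) algorithm:
`next m` is the rank of the next woman `m` will propose to, `wmatch w` is the man
currently (tentatively) held by woman `w`, `props` records all proposals made so far. -/
structure GSState (n : ℕ) where
  next : Fin n → ℕ
  wmatch : Fin n → Option (Fin n)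
  props : List (Fin n × Fin n)

/-- Man `m` is currently not held by any woman. -/
def isUnmatched {n : ℕ} (s : GSState n) (m : Fin n) : Bool :=
  decide (∀ w, s.wmatch w ≠ some m)

/-- One step of men-proposing deferred acceptance: the first unmatched man
proposes to the next woman on his list; she keeps her favorite proposer so far. -/
def GSstep {n : ℕ} (P : Profile n) (s : GSState n) : GSState n :=
  match (List.finRange n).find? (fun m => isUnmatched s m && decide (s.next m < n)) with
  | none => s
  | some m =>
    if h : s.next m < n then
      let w := P.M m ⟨s.next m, h⟩
      let s' : GSState n :=
        { next := Function.update s.next m (s.next m + 1),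
          wmatch := s.wmatch,
          props := (m, w) :: s.props }
      match s.wmatch w with
      | none => { s' with wmatch := Function.update s.wmatch w (some m) }
      | some m' =>
          if (P.W w).symm m < (P.W w).symm m' then
            { s' with wmatch := Function.update s.wmatch w (some m) }
          else s'
    else s

def GSinit (n : ℕ) : GSState n := ⟨fun _ => 0, fun _ => none, []⟩

/-- Run deferred acceptance to completion (at most `n*n` proposals occur). -/
def GSrun {n : ℕ} (P : Profile n) : GSState n := (GSstep P)^[n * n + 1] (GSinit n)

/-- The men-proposing deferred acceptance matching, as a map from men to women. -/
noncomputable def DA {n : ℕ} (P : Profile n) : Fin n → Fin n :=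
  fun m => if h : ∃ w, (GSrun P).wmatch w = some m then h.choose else m

/-- Man `m` proposes to woman `w` during the run of deferred acceptance on `P`. -/
def Proposes {n : ℕ} (P : Profile n) (m w : Fin n) : Prop :=
  (m, w) ∈ (GSrun P).props

/-- `(m, w)` is a blocking pair for the matching `μ` (men to women) w.r.t. profile `P`. -/
def Blocks {n : ℕ} (P : Profile n) (μ : Fin n → Fin n) (m w : Fin n) : Prop :=
  P.mpref m w (μ m) ∧ ∃ m', μ m' = w ∧ P.wpref w m m'

/-- `μ` is a stable matching with respect to profile `P`. -/
def Stable {n : ℕ} (P : Profile n) (μ : Fin n → Fin n) : Prop :=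
  Function.Bijective μ ∧ ∀ m w, ¬ Blocks P μ m w

/-- Replace man `m`'s preference list by `e`. -/
def Profile.updateM {n : ℕ} (P : Profile n) (m : Fin n) (e : Fin n ≃ Fin n) : Profile n :=
  { P with M := Function.update P.M m e }

/-- Replace woman `w`'s preference list by `e`. -/
def Profile.updateW {n : ℕ} (P : Profile n) (w : Fin n) (e : Fin n ≃ Fin n) : Profile n :=
  { P with W := Function.update P.W w e }

/-- The set of women ranked strictly above `w₀` in the list `e`. -/
def Above {n : ℕ} (e : Fin n ≃ Fin n) (w₀ : Fin n) : Set (Fin n) :=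
  {w | e.symm w < e.symm w₀}

/-- The set of women ranked strictly below `w₀` in the list `e`. -/
def Below {n : ℕ} (e : Fin n ≃ Fin n) (w₀ : Fin n) : Set (Fin n) :=
  {w | e.symm w₀ < e.symm w}

/-- `e'` is obtained from man `m`'s true list by pushing up the set `X` and pushing
down the set `Y` around the pivot `DA P m` (the order of women above and below
the pivot is immaterial, cf. Proposition 2 of the paper). -/
def PushUpDown {n : ℕ} (P : Profile n) (m : Fin n) (X Y : Set (Fin n))
    (e' : Fin n ≃ Fin n) : Prop :=
  Above e' (DA P m) = (Above (P.M m) (DA P m) ∪ X) \ Y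

/-- `e'` is obtained from `m`'s true list by pushing up the set `X` above `DA P m`. -/
def PushUp {n : ℕ} (P : Profile n) (m : Fin n) (X : Set (Fin n))
    (e' : Fin n ≃ Fin n) : Prop :=
  PushUpDown P m X ∅ e'

/-- `e'` is obtained from `m`'s true list by pushing down the set `Y` below `DA P m`. -/
def PushDown {n : ℕ} (P : Profile n) (m : Fin n) (Y : Set (Fin n))
    (e' : Fin n ≃ Fin n) : Prop :=
  PushUpDown P m ∅ Y e'

/-- Woman `w` is ranked below `DA P m` in `m`'s true list, and pushing her up
individually leaves `m`'s deferred acceptance partner unchanged (no regret). -/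
def NoRegretWoman {n : ℕ} (P : Profile n) (m w : Fin n) : Prop :=
  w ∈ Below (P.M m) (DA P m) ∧
    ∀ e' : Fin n ≃ Fin n, PushUp P m {w} e' → DA (P.updateM m e') m = DA P m

/-- The no-regret set `W^NR` of accomplice `m`. -/
def WNR {n : ℕ} (P : Profile n) (m : Fin n) : Set (Fin n) :=
  {w | NoRegretWoman P m w}


namespace SM13

variable {n : ℕ}

/-- Position (0 = best) of `x` in the ranking `e`, as a natural number. -/
def posN (e : Fin n ≃ Fin n) (x : Fin n) : ℕ := (e.symm x : ℕ)

lemma posN_lt (e : Fin n ≃ Fin n) (x : Fin n) : posN e x < n := (e.symm x).isLt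

lemma posN_inj {e : Fin n ≃ Fin n} {x y : Fin n} (h : posN e x = posN e y) : x = y :=
  e.symm.injective (Fin.ext h)

lemma posN_apply (e : Fin n ≃ Fin n) (k : ℕ) (h : k < n) : posN e (e ⟨k, h⟩) = k := by
  simp [posN]

lemma mpref_iff (P : Profile n) (m w₁ w₂ : Fin n) :
    P.mpref m w₁ w₂ ↔ posN (P.M m) w₁ < posN (P.M m) w₂ := Iff.rfl

lemma wpref_iff (P : Profile n) (w m₁ m₂ : Fin n) :
    P.wpref w m₁ m₂ ↔ posN (P.W w) m₁ < posN (P.W w) m₂ := Iff.rfl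

lemma updateM_W (P : Profile n) (m : Fin n) (e : Fin n ≃ Fin n) :
    (P.updateM m e).W = P.W := rfl

lemma updateM_M_self (P : Profile n) (m : Fin n) (e : Fin n ≃ Fin n) :
    (P.updateM m e).M m = e := Function.update_self _ _ _

lemma updateM_M_ne (P : Profile n) (m : Fin n) (e : Fin n ≃ Fin n) {m' : Fin n}
    (h : m' ≠ m) : (P.updateM m e).M m' = P.M m' := Function.update_of_ne h _ _

lemma updateM_updateM (P : Profile n) (m : Fin n) (e₁ e₂ : Fin n ≃ Fin n) :
    (P.updateM m e₁).updateM m e₂ = P.updateM m e₂ := by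
  simp [Profile.updateM, Function.update_idem]

/-- Full case analysis of one Gale–Shapley step. -/
lemma GSstep_eq (P : Profile n) (s : GSState n) :
    (GSstep P s = s ∧ ∀ m, (∀ w, s.wmatch w ≠ some m) → ¬ s.next m < n) ∨
    ∃ (m : Fin n) (h : s.next m < n),
      (∀ w, s.wmatch w ≠ some m) ∧
      (GSstep P s).next = Function.update s.next m (s.next m + 1) ∧
      (((GSstep P s).wmatch = Function.update s.wmatch (P.M m ⟨s.next m, h⟩) (some m) ∧
          ∀ c, s.wmatch (P.M m ⟨s.next m, h⟩) = some c →
            posN (P.W (P.M m ⟨s.next m, h⟩)) m < posN (P.W (P.M m ⟨s.next m, h⟩)) c) ∨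
        ((GSstep P s).wmatch = s.wmatch ∧
          ∃ c, s.wmatch (P.M m ⟨s.next m, h⟩) = some c ∧
            posN (P.W (P.M m ⟨s.next m, h⟩)) c < posN (P.W (P.M m ⟨s.next m, h⟩)) m ∧
            c ≠ m)) := by
  rcases hf : (List.finRange n).find? (fun m => isUnmatched s m && decide (s.next m < n))
    with _ | m
  · left
    constructor
    · simp [GSstep, hf]
    · intro m hm hlt
      have hnone := List.find?_eq_none.mp hf m (List.mem_finRange m)
      rw [Bool.and_eq_true, decide_eq_true_iff] at hnone
      exact hnone ⟨by simpa [isUnmatched] using hm, hlt⟩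
  · have hp := List.find?_some hf
    rw [Bool.and_eq_true, decide_eq_true_iff] at hp
    obtain ⟨hu, hlt⟩ := hp
    have hunm : ∀ w, s.wmatch w ≠ some m := by
      simpa [isUnmatched] using hu
    right
    refine ⟨m, hlt, hunm, ?_, ?_⟩
    · rcases hw : s.wmatch (P.M m ⟨s.next m, hlt⟩) with _ | c
      · simp [GSstep, hf, hlt, hw]
      · by_cases hcmp : (P.W (P.M m ⟨s.next m, hlt⟩)).symm m
            < (P.W (P.M m ⟨s.next m, hlt⟩)).symm c
        · simp [GSstep, hf, hlt, hw, hcmp]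
        · simp [GSstep, hf, hlt, hw, hcmp]
    · rcases hw : s.wmatch (P.M m ⟨s.next m, hlt⟩) with _ | c
      · left
        constructor
        · simp [GSstep, hf, hlt, hw]
        · intro c hc; cases hc
      · by_cases hcmp : (P.W (P.M m ⟨s.next m, hlt⟩)).symm m
            < (P.W (P.M m ⟨s.next m, hlt⟩)).symm c
        · left
          constructor
          · simp [GSstep, hf, hlt, hw, hcmp]
          · intro c' hc'; cases hc'; exact hcmp
        · right
          refine ⟨by simp [GSstep, hf, hlt, hw, hcmp], c, rfl, ?_, ?_⟩
          · have hne : c ≠ m := fun h => hunm _ (by rw [← h]; exact hw)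
            have : (P.W (P.M m ⟨s.next m, hlt⟩)).symm c
                ≤ (P.W (P.M m ⟨s.next m, hlt⟩)).symm m := le_of_not_gt hcmp
            exact lt_of_le_of_ne (by exact_mod_cast this) (fun h => hne (posN_inj h))
          · exact fun h => hunm _ (by rw [← h]; exact hw)


/-- The state after `k` steps of Gale–Shapley. -/
def It (P : Profile n) (k : ℕ) : GSState n := (GSstep P)^[k] (GSinit n)

lemma It_succ (P : Profile n) (k : ℕ) : It P (k+1) = GSstep P (It P k) :=
  Function.iterate_succ_apply' _ _ _

lemma GSrun_eq (P : Profile n) : GSrun P = It P (n*n+1) := rfl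

/-- Run invariants of Gale–Shapley. -/
structure Inv (P : Profile n) (s : GSState n) : Prop where
  next_le : ∀ m, s.next m ≤ n
  matched_pos : ∀ m w, s.wmatch w = some m → s.next m = posN (P.M m) w + 1
  hist : ∀ m w, posN (P.M m) w < s.next m →
    s.wmatch w = some m ∨ ∃ c, s.wmatch w = some c ∧ posN (P.W w) c < posN (P.W w) m
  opt : ∀ ν, Stable P ν → ∀ m, posN (P.M m) (ν m) < s.next m → s.wmatch (ν m) = some m

lemma inv_init (P : Profile n) : Inv P (GSinit n) := by
  refine ⟨fun m => ?_, fun m w hh => ?_, fun m w hh => ?_, fun ν hν m hh => ?_⟩ <;>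
    simp_all [GSinit]

lemma inv_step (P : Profile n) (s : GSState n) (hI : Inv P s) : Inv P (GSstep P s) := by
  rcases GSstep_eq P s with ⟨hfix, -⟩ | ⟨ms, h, unm, hnext, hcase⟩
  · rw [hfix]; exact hI
  · have hpos : posN (P.M ms) (P.M ms ⟨s.next ms, h⟩) = s.next ms := posN_apply _ _ _
    have hnle : ∀ m, (GSstep P s).next m ≤ n := by
      intro m
      rw [hnext]
      by_cases hm : m = ms
      · subst hm; rw [Function.update_self]; omega
      · rw [Function.update_of_ne hm]; exact hI.next_le m
    rcases hcase with ⟨hwm, hacc⟩ | ⟨hwm, c, hc, hclt, hcne⟩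
    · -- ACCEPT case
      constructor
      · exact hnle
      · intro m w hmw
        rw [hwm] at hmw
        rw [hnext]
        by_cases hww : w = P.M ms ⟨s.next ms, h⟩
        · subst hww
          rw [Function.update_self] at hmw
          injection hmw with hm
          subst hm
          rw [Function.update_self, hpos]
        · rw [Function.update_of_ne hww] at hmw
          have hm : m ≠ ms := fun hh => unm w (hh ▸ hmw)
          rw [Function.update_of_ne hm]
          exact hI.matched_pos m w hmw
      · intro m w hltw
        rw [hnext] at hltw
        rw [hwm]
        by_cases hm : m = ms
        · subst hm
          rw [Function.update_self] at hltw
          by_cases hww : w = P.M m ⟨s.next m, h⟩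
          · subst hww; left; rw [Function.update_self]
          · have hlt2 : posN (P.M m) w < s.next m := by
              have : posN (P.M m) w ≠ s.next m := fun heq =>
                hww (posN_inj (heq.trans hpos.symm))
              omega
            rcases hI.hist m w hlt2 with hh | ⟨c, hcc, hlt3⟩
            · exact absurd hh (unm w)
            · exact Or.inr ⟨c, by rw [Function.update_of_ne hww]; exact hcc, hlt3⟩
        · rw [Function.update_of_ne hm] at hltw
          rcases hI.hist m w hltw with hh | ⟨c, hcc, hlt3⟩
          · by_cases hww : w = P.M ms ⟨s.next ms, h⟩
            · subst hww
              exact Or.inr ⟨ms, by rw [Function.update_self], hacc m hh⟩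
            · left; rw [Function.update_of_ne hww]; exact hh
          · by_cases hww : w = P.M ms ⟨s.next ms, h⟩
            · subst hww
              exact Or.inr ⟨ms, by rw [Function.update_self], lt_trans (hacc c hcc) hlt3⟩
            · exact Or.inr ⟨c, by rw [Function.update_of_ne hww]; exact hcc, hlt3⟩
      · intro ν hν m hltν
        rw [hnext] at hltν
        rw [hwm]
        by_cases hm : m = ms
        · subst hm
          rw [Function.update_self] at hltν
          by_cases hνe : ν m = P.M m ⟨s.next m, h⟩
          · rw [hνe, Function.update_self]
          · have hlt2 : posN (P.M m) (ν m) < s.next m := by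
              have : posN (P.M m) (ν m) ≠ s.next m := fun heq =>
                hνe (posN_inj (heq.trans hpos.symm))
              omega
            exact absurd (hI.opt ν hν m hlt2) (unm _)
        · rw [Function.update_of_ne hm] at hltν
          have hold := hI.opt ν hν m hltν
          by_cases hνe : ν m = P.M ms ⟨s.next ms, h⟩
          · exfalso
            apply hν.2 ms (P.M ms ⟨s.next ms, h⟩)
            constructor
            · have h1 : ν ms ≠ P.M ms ⟨s.next ms, h⟩ := fun hh =>
                hm (hν.1.1 (hνe.trans hh.symm))
              have h2 : ¬ posN (P.M ms) (ν ms) < s.next ms := fun hh =>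
                unm _ (hI.opt ν hν ms hh)
              have h3 : posN (P.M ms) (ν ms) ≠ s.next ms := fun heq =>
                h1 (posN_inj (heq.trans hpos.symm))
              rw [mpref_iff, hpos]
              omega
            · exact ⟨m, hνe, hacc m (by rw [← hνe]; exact hold)⟩
          · rw [Function.update_of_ne hνe]
            exact hold
    · -- REJECT case
      constructor
      · exact hnle
      · intro m w hmw
        rw [hwm] at hmw
        rw [hnext]
        have hm : m ≠ ms := fun hh => unm w (hh ▸ hmw)
        rw [Function.update_of_ne hm]
        exact hI.matched_pos m w hmw
      · intro m w hltw
        rw [hnext] at hltw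
        rw [hwm]
        by_cases hm : m = ms
        · subst hm
          rw [Function.update_self] at hltw
          by_cases hww : w = P.M m ⟨s.next m, h⟩
          · subst hww
            exact Or.inr ⟨c, hc, hclt⟩
          · have hlt2 : posN (P.M m) w < s.next m := by
              have : posN (P.M m) w ≠ s.next m := fun heq =>
                hww (posN_inj (heq.trans hpos.symm))
              omega
            rcases hI.hist m w hlt2 with hh | hh
            · exact absurd hh (unm w)
            · exact Or.inr hh
        · rw [Function.update_of_ne hm] at hltw
          exact hI.hist m w hltw
      · intro ν hν m hltν
        rw [hnext] at hltν
        rw [hwm]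
        by_cases hm : m = ms
        · subst hm
          rw [Function.update_self] at hltν
          by_cases hνe : ν m = P.M m ⟨s.next m, h⟩
          · exfalso
            apply hν.2 c (P.M m ⟨s.next m, h⟩)
            have hnc := hI.matched_pos c _ hc
            constructor
            · have hνc : ν c ≠ P.M m ⟨s.next m, h⟩ := fun hh =>
                hcne (hν.1.1 (hh.trans hνe.symm))
              have h2 : ¬ posN (P.M c) (ν c) < s.next c := fun hh => by
                have hoc := hI.opt ν hν c hh
                have := hI.matched_pos c (ν c) hoc
                have h3 : posN (P.M c) (ν c) = posN (P.M c) (P.M m ⟨s.next m, h⟩) := by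
                  omega
                exact hνc (posN_inj h3)
              show posN (P.M c) (P.M m ⟨s.next m, h⟩) < posN (P.M c) (ν c)
              omega
            · exact ⟨m, hνe, hclt⟩
          · have hlt2 : posN (P.M m) (ν m) < s.next m := by
              have : posN (P.M m) (ν m) ≠ s.next m := fun heq =>
                hνe (posN_inj (heq.trans hpos.symm))
              omega
            exact absurd (hI.opt ν hν m hlt2) (unm _)
        · rw [Function.update_of_ne hm] at hltν
          exact hI.opt ν hν m hltν

lemma inv_It (P : Profile n) (k : ℕ) : Inv P (It P k) := by
  induction k with
  | zero => exact inv_init P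
  | succ k ih => rw [It_succ]; exact inv_step P _ ih


lemma step_next_or (P : Profile n) (s : GSState n) (m : Fin n) :
    (GSstep P s).next m = s.next m ∨ (GSstep P s).next m = s.next m + 1 := by
  rcases GSstep_eq P s with ⟨hfix, -⟩ | ⟨ms, h, -, hnext, -⟩
  · rw [hfix]; left; rfl
  · rw [hnext]
    by_cases hm : m = ms
    · subst hm; rw [Function.update_self]; right; rfl
    · rw [Function.update_of_ne hm]; left; rfl

lemma step_incr (P : Profile n) (s : GSState n) (m : Fin n)
    (hm : (GSstep P s).next m ≠ s.next m) :
    (∀ w, s.wmatch w ≠ some m) ∧ ∀ m₂, m₂ ≠ m → (GSstep P s).next m₂ = s.next m₂ := by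
  rcases GSstep_eq P s with ⟨hfix, -⟩ | ⟨ms, h, unm, hnext, -⟩
  · rw [hfix] at hm; exact absurd rfl hm
  · have hmm : m = ms := by
      by_contra hne
      rw [hnext, Function.update_of_ne hne] at hm; exact hm rfl
    subst hmm
    exact ⟨unm, fun m₂ h₂ => by rw [hnext, Function.update_of_ne h₂]⟩

lemma next_mono (P : Profile n) (m : Fin n) : Monotone fun k => (It P k).next m := by
  apply monotone_nat_of_le_succ
  intro k
  simp only [It_succ]
  rcases step_next_or P (It P k) m with hh | hh <;> omega

lemma improve_step (P : Profile n) (s : GSState n) {w c : Fin n}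
    (hc : s.wmatch w = some c) :
    ∃ c', (GSstep P s).wmatch w = some c' ∧
      (c' = c ∨ posN (P.W w) c' < posN (P.W w) c) := by
  rcases GSstep_eq P s with ⟨hfix, -⟩ | ⟨ms, h, unm, hnext, hcase⟩
  · rw [hfix]; exact ⟨c, hc, Or.inl rfl⟩
  · rcases hcase with ⟨hwm, hacc⟩ | ⟨hwm, c₂, hc₂, -⟩
    · by_cases hww : w = P.M ms ⟨s.next ms, h⟩
      · subst hww
        exact ⟨ms, by rw [hwm, Function.update_self], Or.inr (hacc c hc)⟩
      · exact ⟨c, by rw [hwm, Function.update_of_ne hww]; exact hc, Or.inl rfl⟩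
    · exact ⟨c, by rw [hwm]; exact hc, Or.inl rfl⟩

lemma improve (P : Profile n) {k l : ℕ} (hkl : k ≤ l) {w c : Fin n}
    (hc : (It P k).wmatch w = some c) :
    ∃ c', (It P l).wmatch w = some c' ∧
      (c' = c ∨ posN (P.W w) c' < posN (P.W w) c) := by
  induction l, hkl using Nat.le_induction with
  | base => exact ⟨c, hc, Or.inl rfl⟩
  | succ l hkl ih =>
    obtain ⟨c', hc', hor⟩ := ih
    rw [It_succ]
    obtain ⟨c'', hc'', hor2⟩ := improve_step P (It P l) hc'
    refine ⟨c'', hc'', ?_⟩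
    rcases hor with rfl | hlt
    · exact hor2
    · rcases hor2 with rfl | hlt2
      · exact Or.inr hlt
      · exact Or.inr (lt_trans hlt2 hlt)

lemma ivt (P : Profile n) (m : Fin n) (p : ℕ) :
    ∀ l, p < (It P l).next m →
      ∃ u, u < l ∧ (It P u).next m = p ∧ (It P (u+1)).next m = p + 1 := by
  intro l
  induction l with
  | zero => intro hl; simp [It, GSinit] at hl
  | succ l ih =>
    intro hl
    by_cases hp : p < (It P l).next m
    · obtain ⟨u, hu, h1, h2⟩ := ih hp
      exact ⟨u, Nat.lt_succ_of_lt hu, h1, h2⟩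
    · push_neg at hp
      have hl' : p < (GSstep P (It P l)).next m := by rw [← It_succ]; exact hl
      rcases step_next_or P (It P l) m with hh | hh
      · omega
      · refine ⟨l, Nat.lt_succ_self l, by omega, ?_⟩
        rw [It_succ]; omega

/-- Potential: total number of proposals made. -/
def phi (s : GSState n) : ℕ := ∑ m, s.next m

lemma phi_step (P : Profile n) (s : GSState n) :
    GSstep P s = s ∨ phi (GSstep P s) = phi s + 1 := by
  rcases GSstep_eq P s with ⟨hfix, -⟩ | ⟨ms, h, -, hnext, -⟩
  · left; exact hfix
  · right
    unfold phi
    rw [hnext]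
    have h1 : ∑ m, Function.update s.next ms (s.next ms + 1) m
        = (s.next ms + 1) + ∑ m ∈ Finset.univ \ {ms}, s.next m :=
      Finset.sum_update_of_mem (Finset.mem_univ ms) _ _
    have h2 : ∑ m, s.next m = s.next ms + ∑ m ∈ Finset.univ \ {ms}, s.next m :=
      Finset.sum_eq_add_sum_sdiff_singleton_of_mem (Finset.mem_univ ms) _
    omega

lemma phi_le (P : Profile n) (k : ℕ) : phi (It P k) ≤ n * n := by
  have : ∀ m : Fin n, (It P k).next m ≤ n := (inv_It P k).next_le
  calc phi (It P k) ≤ ∑ _m : Fin n, n := Finset.sum_le_sum (fun m _ => this m)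
  _ = n * n := by simp [Finset.sum_const, Finset.card_univ, mul_comm]

lemma run_eq_It_fix : ∀ (P : Profile n), GSstep P (GSrun P) = GSrun P := by
  intro P
  have key : ∃ k, k ≤ n*n ∧ GSstep P (It P k) = It P k := by
    by_contra hcon
    push_neg at hcon
    have grow : ∀ k, k ≤ n*n + 1 → k ≤ phi (It P k) := by
      intro k
      induction k with
      | zero => intro _; exact Nat.zero_le _
      | succ k ih =>
        intro hk
        have hne := hcon k (by omega)
        rcases phi_step P (It P k) with hfix | hinc
        · exact absurd hfix hne
        · have := ih (by omega)
          rw [It_succ]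
          omega
    have h1 := grow (n*n+1) le_rfl
    have h2 := phi_le P (n*n+1)
    omega
  obtain ⟨k, hk, hfix⟩ := key
  have hrun : GSrun P = It P k := by
    rw [GSrun_eq]
    have h2 : It P (n*n+1) = (GSstep P)^[n*n+1-k] ((GSstep P)^[k] (GSinit n)) := by
      rw [← Function.iterate_add_apply]
      show It P (n*n+1) = It P (n*n+1-k+k)
      congr 1
      omega
    rw [h2]
    exact Function.iterate_fixed hfix _
  rw [hrun]
  exact hfix

lemma inv_run (P : Profile n) : Inv P (GSrun P) := GSrun_eq P ▸ inv_It P (n*n+1)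

lemma run_no_proposer (P : Profile n) (m : Fin n)
    (hunm : ∀ w, (GSrun P).wmatch w ≠ some m) : ¬ (GSrun P).next m < n := by
  rcases GSstep_eq P (GSrun P) with ⟨-, hchar⟩ | ⟨ms, h, unm, hnext, -⟩
  · exact hchar m hunm
  · exfalso
    rw [run_eq_It_fix P] at hnext
    have := congrFun hnext ms
    rw [Function.update_self] at this
    omega

lemma all_matched (P : Profile n) (m : Fin n) : ∃ w, (GSrun P).wmatch w = some m := by
  by_contra hcon
  push_neg at hcon
  have hI := inv_run P
  have hn : (GSrun P).next m = n :=
    le_antisymm (hI.next_le m) (le_of_not_gt (run_no_proposer P m hcon))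
  have hw : ∀ w, ∃ c, (GSrun P).wmatch w = some c := by
    intro w
    have hlt : posN (P.M m) w < (GSrun P).next m := by rw [hn]; exact posN_lt _ _
    rcases hI.hist m w hlt with hh | ⟨c, hc, -⟩
    · exact absurd hh (hcon w)
    · exact ⟨c, hc⟩
  choose g hg using hw
  have hginj : Function.Injective g := by
    intro w₁ w₂ he
    have h1 := hI.matched_pos (g w₁) w₁ (hg w₁)
    have h2 := hI.matched_pos (g w₂) w₂ (hg w₂)
    rw [he] at h1
    exact posN_inj (e := P.M (g w₂)) (by omega)
  obtain ⟨w, hwm⟩ := Finite.injective_iff_surjective.mp hginj m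
  exact hcon w (hwm ▸ hg w)

lemma DA_spec (P : Profile n) (m : Fin n) : (GSrun P).wmatch (DA P m) = some m := by
  have hex := all_matched P m
  unfold DA
  rw [dif_pos hex]
  exact hex.choose_spec

lemma DA_eq_of (P : Profile n) {m w : Fin n} (hw : (GSrun P).wmatch w = some m) :
    DA P m = w := by
  have h1 := (inv_run P).matched_pos m _ (DA_spec P m)
  have h2 := (inv_run P).matched_pos m w hw
  exact posN_inj (e := P.M m) (by omega)

lemma DA_inj (P : Profile n) : Function.Injective (DA P) := by
  intro m₁ m₂ he
  have h1 := DA_spec P m₁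
  rw [he] at h1
  have h2 := DA_spec P m₂
  rw [h2] at h1
  injection h1 with h1
  exact h1.symm

lemma DA_bij (P : Profile n) : Function.Bijective (DA P) :=
  ⟨DA_inj P, Finite.injective_iff_surjective.mp (DA_inj P)⟩

lemma next_run (P : Profile n) (m : Fin n) :
    (GSrun P).next m = posN (P.M m) (DA P m) + 1 :=
  (inv_run P).matched_pos m _ (DA_spec P m)

/-- The deferred-acceptance matching is stable. -/
theorem DA_stable (P : Profile n) : Stable P (DA P) := by
  refine ⟨DA_bij P, fun m w hb => ?_⟩
  obtain ⟨hpref, m₂, hm₂, hwp⟩ := hb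
  rw [mpref_iff] at hpref
  have hnext := next_run P m
  have hlt : posN (P.M m) w < (GSrun P).next m := by omega
  rcases (inv_run P).hist m w hlt with hh | ⟨c, hc, hcl⟩
  · have hda := DA_eq_of P hh
    rw [hda] at hpref
    exact lt_irrefl _ hpref
  · have h2 : (GSrun P).wmatch w = some m₂ := by rw [← hm₂]; exact DA_spec P m₂
    rw [h2] at hc
    injection hc with hc
    subst hc
    rw [wpref_iff] at hwp
    omega

/-- Man-optimality of deferred acceptance. -/
theorem DA_opt (P : Profile n) (ν : Fin n → Fin n) (hν : Stable P ν) (m : Fin n) :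
    posN (P.M m) (DA P m) ≤ posN (P.M m) (ν m) := by
  by_contra hcon
  push_neg at hcon
  have hlt : posN (P.M m) (ν m) < (GSrun P).next m := by
    have := next_run P m; omega
  have h1 := (inv_run P).opt ν hν m hlt
  have h2 := DA_eq_of P h1
  rw [h2] at hcon
  exact lt_irrefl _ hcon


lemma apply_posN (e : Fin n ≃ Fin n) (x : Fin n) (h : posN e x < n) :
    e ⟨posN e x, h⟩ = x := by
  have hfe : (⟨posN e x, h⟩ : Fin n) = e.symm x := Fin.ext rfl
  rw [hfe, Equiv.apply_symm_apply]

/-- Gale–Sotomayor blocking lemma, in the form needed here: if some set of men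
all strictly prefer an (injective) matching `μ'` to the deferred-acceptance
matching, then `μ'` admits a blocking pair whose man is not in that set. -/
theorem blocking_lemma (P : Profile n) (μ' : Fin n → Fin n)
    (hμ' : Function.Injective μ') (M' : Finset (Fin n))
    (hM'mem : ∀ m'', m'' ∈ M' ↔
      posN (P.M m'') (μ' m'') < posN (P.M m'') (DA P m''))
    (hne : M'.Nonempty) :
    ∃ m₁, m₁ ∉ M' ∧ ∃ w₁, Blocks P μ' m₁ w₁ := by
  classical
  by_cases hcase : M'.image μ' ⊆ M'.image (DA P)
  · -- Case 2 : μ'(M') = μ(M'); temporal argument.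
    have heq : M'.image μ' = M'.image (DA P) :=
      Finset.eq_of_subset_of_card_le hcase (le_of_eq (by
        rw [Finset.card_image_of_injective _ (DA_inj P),
          Finset.card_image_of_injective _ hμ']))
    set W' := M'.image μ' with hW'
    set N := n*n+1 with hN
    have hItN : It P N = GSrun P := rfl
    have hnextN : ∀ m'', (It P N).next m'' = posN (P.M m'') (DA P m'') + 1 :=
      fun m'' => by rw [hItN]; exact next_run P m''
    set D := (Finset.range N).filter (fun u => ∃ m' ∈ M',
      ∃ h : (It P u).next m' < n,
        (It P (u+1)).next m' = (It P u).next m' + 1 ∧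
        P.M m' ⟨(It P u).next m', h⟩ ∈ W') with hD
    have hDin : ∀ m₂ ∈ M', ∀ v ∈ W', posN (P.M m₂) v < (It P N).next m₂ →
        ∃ u ∈ D, (It P u).next m₂ = posN (P.M m₂) v ∧
          (It P (u+1)).next m₂ = posN (P.M m₂) v + 1 := by
      intro m₂ hm₂ v hv hlt
      obtain ⟨u, hu, h1, h2⟩ := ivt P m₂ (posN (P.M m₂) v) N hlt
      refine ⟨u, ?_, h1, h2⟩
      rw [hD, Finset.mem_filter]
      refine ⟨Finset.mem_range.mpr hu, m₂, hm₂, ?_⟩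
      have hlt' : (It P u).next m₂ < n := by rw [h1]; exact posN_lt _ _
      refine ⟨hlt', by omega, ?_⟩
      have hfin : (⟨(It P u).next m₂, hlt'⟩ : Fin n)
          = ⟨posN (P.M m₂) v, posN_lt _ _⟩ := Fin.ext h1
      rw [hfin, apply_posN]
      exact hv
    have hDne : D.Nonempty := by
      obtain ⟨m₂, hm₂⟩ := hne
      have hv : μ' m₂ ∈ W' := Finset.mem_image_of_mem μ' hm₂
      obtain ⟨u, hu, -⟩ := hDin m₂ hm₂ (μ' m₂) hv
        (by rw [hnextN]; exact Nat.lt_succ_of_lt ((hM'mem m₂).mp hm₂))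
      exact ⟨u, hu⟩
    set t := D.max' hDne with ht
    have htD : t ∈ D := D.max'_mem hDne
    rw [hD, Finset.mem_filter] at htD
    obtain ⟨htN, m', hm'M', h, hstep, hwW'⟩ := htD
    have htN' : t < N := Finset.mem_range.mp htN
    set w := P.M m' ⟨(It P t).next m', h⟩ with hw
    have hposw : posN (P.M m') w = (It P t).next m' := posN_apply _ _ _
    have hnolate : ∀ m₂ ∈ M', ∀ v ∈ W', posN (P.M m₂) v < (It P N).next m₂ →
        ∃ u ≤ t, (It P u).next m₂ = posN (P.M m₂) v ∧
          (It P (u+1)).next m₂ = posN (P.M m₂) v + 1 := by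
      intro m₂ hm₂ v hv hlt
      obtain ⟨u, hu, h1, h2⟩ := hDin m₂ hm₂ v hv hlt
      exact ⟨u, D.le_max' u hu, h1, h2⟩
    -- the proposal at step t is m'’s last: w = DA P m'
    have hwμ : w = DA P m' := by
      have hvW' : DA P m' ∈ W' := by
        rw [heq]; exact Finset.mem_image_of_mem _ hm'M'
      obtain ⟨u, hu, h1, -⟩ := hnolate m' hm'M' (DA P m')
        hvW' (by rw [hnextN]; omega)
      have hmono1 : (It P u).next m' ≤ (It P t).next m' := next_mono P m' hu
      have hmono2 : (It P (t+1)).next m' ≤ (It P N).next m' :=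
        next_mono P m' (by omega)
      rw [hnextN] at hmono2
      rw [hstep] at hmono2
      have : posN (P.M m') (DA P m') = posN (P.M m') w := by omega
      exact (posN_inj this).symm
    -- step t facts: m' is unmatched at t, and only m'’s pointer moves at t
    have hstep' : (GSstep P (It P t)).next m' ≠ (It P t).next m' := by
      rw [← It_succ, hstep]; omega
    obtain ⟨hunm', huniq⟩ := step_incr P (It P t) m' hstep'
    -- the woman w currently holds some m₁ who proposed to her before t
    obtain ⟨m₂, hm₂M', hμ'm₂⟩ := Finset.mem_image.mp hwW'
    have hm₂ne : m₂ ≠ m' := by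
      intro hh
      subst hh
      have := (hM'mem m₂).mp hm₂M'
      rw [hμ'm₂, hwμ] at this
      exact lt_irrefl _ this
    have hposm₂ : posN (P.M m₂) w < (It P N).next m₂ := by
      rw [hnextN]
      have h1 := (hM'mem m₂).mp hm₂M'
      rw [hμ'm₂] at h1
      omega
    obtain ⟨u, hut, hu1, hu2⟩ := hnolate m₂ hm₂M' w hwW' hposm₂
    have hult : u < t := by
      rcases Nat.lt_or_ge u t with hh | hh
      · exact hh
      · exfalso
        have hue : u = t := le_antisymm hut hh
        subst hue
        have := huniq m₂ hm₂ne
        rw [It_succ] at hu2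
        omega
    have hist₂ := (inv_It P (u+1)).hist m₂ w (by omega)
    have hc₀ : ∃ c₀, (It P (u+1)).wmatch w = some c₀ ∧
        (c₀ = m₂ ∨ posN (P.W w) c₀ < posN (P.W w) m₂) := by
      rcases hist₂ with hh | ⟨c₀, hcc, hlt3⟩
      · exact ⟨m₂, hh, Or.inl rfl⟩
      · exact ⟨c₀, hcc, Or.inr hlt3⟩
    obtain ⟨c₀, hc₀m, hc₀or⟩ := hc₀
    obtain ⟨m₁, hm₁m, hm₁or⟩ := improve P (show u+1 ≤ t by omega) hc₀m
    have hm₁ne' : m₁ ≠ m' := fun hh => hunm' w (hh ▸ hm₁m)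
    have hm₁pos := (inv_It P t).matched_pos m₁ w hm₁m
    have hFw : (It P N).wmatch w = some m' := by
      rw [hwμ, hItN]; exact DA_spec P m'
    have hμm₁ : DA P m₁ ≠ w := by
      intro hh
      have := DA_spec P m₁
      rw [hh, ← hItN] at this
      rw [this] at hFw
      injection hFw with hFw
      exact hm₁ne' hFw
    have hm₁lt : posN (P.M m₁) w < posN (P.M m₁) (DA P m₁) := by
      have hmono : (It P t).next m₁ ≤ (It P N).next m₁ := next_mono P m₁ (by omega)
      rw [hnextN] at hmono
      have hneq : posN (P.M m₁) (DA P m₁) ≠ posN (P.M m₁) w :=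
        fun hh => hμm₁ (posN_inj hh)
      omega
    have hm₁M' : m₁ ∉ M' := by
      intro hm₁M'
      have hvW' : DA P m₁ ∈ W' := by
        rw [heq]; exact Finset.mem_image_of_mem _ hm₁M'
      obtain ⟨u₃, hu₃t, h31, h32⟩ := hnolate m₁ hm₁M' (DA P m₁) hvW'
        (by rw [hnextN]; omega)
      rcases Nat.lt_or_ge u₃ t with hh | hh
      · have hmono : (It P (u₃+1)).next m₁ ≤ (It P t).next m₁ :=
          next_mono P m₁ (by omega)
        omega
      · have hue : u₃ = t := le_antisymm hu₃t hh
        subst hue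
        have := huniq m₁ hm₁ne'
        rw [It_succ] at h32
        omega
    have hm₁m₂ : m₁ ≠ m₂ := fun hh => hm₁M' (hh ▸ hm₂M')
    have hwpref : posN (P.W w) m₁ < posN (P.W w) m₂ := by
      rcases hm₁or with rfl | hlt1
      · rcases hc₀or with rfl | hlt2
        · exact absurd rfl hm₁m₂
        · exact hlt2
      · rcases hc₀or with rfl | hlt2
        · exact hlt1
        · exact lt_trans hlt1 hlt2
    have hmpref : posN (P.M m₁) w < posN (P.M m₁) (μ' m₁) := by
      have := (hM'mem m₁)
      have hnot : ¬ posN (P.M m₁) (μ' m₁) < posN (P.M m₁) (DA P m₁) :=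
        fun hh => hm₁M' ((hM'mem m₁).mpr hh)
      omega
    exact ⟨m₁, hm₁M', w, hmpref, m₂, hμ'm₂, hwpref⟩
  · -- Case 1 : some woman in μ'(M') is not in μ(M').
    rw [Finset.not_subset] at hcase
    obtain ⟨v, hvμ', hvμ⟩ := hcase
    obtain ⟨m₃, hm₃M', hμ'm₃⟩ := Finset.mem_image.mp hvμ'
    obtain ⟨m₁, hμm₁⟩ := (DA_bij P).2 v
    have hm₁M' : m₁ ∉ M' := fun hh => hvμ (Finset.mem_image.mpr ⟨m₁, hh, hμm₁⟩)
    have hm₁m₃ : m₁ ≠ m₃ := by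
      intro hh
      subst hh
      have := (hM'mem m₁).mp hm₃M'
      rw [hμ'm₃, hμm₁] at this
      exact lt_irrefl _ this
    have hstab := (DA_stable P).2 m₃ v
    rw [Blocks] at hstab
    push_neg at hstab
    have hm₃pref : P.mpref m₃ v (DA P m₃) := by
      have := (hM'mem m₃).mp hm₃M'
      rw [hμ'm₃] at this
      exact this
    have hwp : posN (P.W v) m₁ < posN (P.W v) m₃ := by
      have h1 := hstab hm₃pref m₁ hμm₁
      rw [wpref_iff] at h1
      have : posN (P.W v) m₁ ≠ posN (P.W v) m₃ := fun hh => hm₁m₃ (posN_inj hh)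
      omega
    have hmpref : posN (P.M m₁) v < posN (P.M m₁) (μ' m₁) := by
      have hnot : ¬ posN (P.M m₁) (μ' m₁) < posN (P.M m₁) (DA P m₁) :=
        fun hh => hm₁M' ((hM'mem m₁).mpr hh)
      have hne2 : μ' m₁ ≠ v := fun hh => hm₁m₃ (hμ' (hh.trans hμ'm₃.symm))
      have : posN (P.M m₁) (μ' m₁) ≠ posN (P.M m₁) v := fun hh => hne2 (posN_inj hh)
      rw [hμm₁] at hnot
      omega
    exact ⟨m₁, hm₁M', v, hmpref, m₃, hμ'm₃, hwp⟩


/-- Dubins–Freedman: a man cannot improve his deferred-acceptance partner by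
misreporting his preference list. -/
theorem dubins_freedman (P : Profile n) (m : Fin n) (e' : Fin n ≃ Fin n) :
    posN (P.M m) (DA P m) ≤ posN (P.M m) (DA (P.updateM m e') m) := by
  classical
  by_contra hcon
  push_neg at hcon
  set P' := P.updateM m e' with hP'
  set μ' := DA P' with hμ'
  set M' := Finset.univ.filter
    (fun m'' => posN (P.M m'') (μ' m'') < posN (P.M m'') (DA P m'')) with hM'
  have hM'mem : ∀ m'', m'' ∈ M' ↔
      posN (P.M m'') (μ' m'') < posN (P.M m'') (DA P m'') := by
    intro m''; simp [hM']
  have hmM' : m ∈ M' := (hM'mem m).mpr hcon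
  obtain ⟨m₁, hm₁M', w₁, hb⟩ := blocking_lemma P μ' (DA_inj P') M' hM'mem ⟨m, hmM'⟩
  have hm₁m : m₁ ≠ m := fun hh => hm₁M' (hh ▸ hmM')
  apply (DA_stable P').2 m₁ w₁
  obtain ⟨hmp, m₂, hm₂, hwp⟩ := hb
  refine ⟨?_, m₂, hm₂, hwp⟩
  have hMM : P'.M m₁ = P.M m₁ := updateM_M_ne P m e' hm₁m
  show (P'.M m₁).symm w₁ < (P'.M m₁).symm (μ' m₁)
  rw [hMM]
  exact hmp

/-- Stability transfers along a change of one man's list that does not enlarge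
the set of women he ranks above his current partner. -/
lemma stable_transfer (P₁ P₂ : Profile n) (m : Fin n) (ν : Fin n → Fin n)
    (hstab : Stable P₁ ν) (hW : P₁.W = P₂.W)
    (hM : ∀ m'', m'' ≠ m → P₁.M m'' = P₂.M m'')
    (hsub : ∀ w, posN (P₂.M m) w < posN (P₂.M m) (ν m) →
      posN (P₁.M m) w < posN (P₁.M m) (ν m)) :
    Stable P₂ ν := by
  refine ⟨hstab.1, fun m'' w hb => ?_⟩
  obtain ⟨hmp, m₂, hm₂, hwp⟩ := hb
  have hwp' : P₁.wpref w m'' m₂ := by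
    show (P₁.W w).symm m'' < (P₁.W w).symm m₂
    rw [hW]
    exact hwp
  by_cases hm'' : m'' = m
  · subst hm''
    exact hstab.2 m'' w ⟨hsub w hmp, m₂, hm₂, hwp'⟩
  · refine hstab.2 m'' w ⟨?_, m₂, hm₂, hwp'⟩
    show (P₁.M m'').symm w < (P₁.M m'').symm (ν m'')
    rw [hM m'' hm'']
    exact hmp

end SM13





/-- If the pushed-up set `Y` contains a with-regret woman `w'`
(a woman below `DA P m` not in `W^NR`), then pushing up `Y` causes regret for `m`. -/
theorem pushUp_with_regret_woman (n : ℕ) (P : Profile n) (m : Fin n)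
    (Y : Set (Fin n)) (hY : Y ⊆ Below (P.M m) (DA P m))
    (w' : Fin n) (hw'Y : w' ∈ Y) (hw'R : w' ∉ WNR P m)
    (eY : Fin n ≃ Fin n) (hpu : PushUp P m Y eY) :
    P.mpref m (DA P m) (DA (P.updateM m eY) m) := by
  classical
  set w₀ := DA P m with hw₀
  have hDF1 := SM13.dubins_freedman P m eY
  rw [PushUp, PushUpDown, Set.diff_empty] at hpu
  have hbelow : w' ∈ Below (P.M m) w₀ := hY hw'Y
  have hnr : ¬ NoRegretWoman P m w' := hw'R
  rw [NoRegretWoman] at hnr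
  push_neg at hnr
  obtain ⟨e₀, h0pu, hne0⟩ := hnr hbelow
  rw [PushUp, PushUpDown, Set.diff_empty] at h0pu
  have hneq : DA (P.updateM m eY) m ≠ w₀ := by
    intro hEq
    set Q := P.updateM m eY with hQ
    set P0 := P.updateM m e₀ with hP0
    have hM0 : P0.M m = e₀ := SM13.updateM_M_self P m e₀
    have hMQ : Q.M m = eY := SM13.updateM_M_self P m eY
    have hAbove_sub : Above e₀ w₀ ⊆ Above eY w₀ := by
      rw [h0pu, hpu]
      exact Set.union_subset_union_right _ (Set.singleton_subset_iff.mpr hw'Y)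
    have hQstab : Stable Q (DA Q) := SM13.DA_stable Q
    have htrans : Stable P0 (DA Q) := by
      refine SM13.stable_transfer Q P0 m (DA Q) hQstab rfl ?_ ?_
      · intro m'' hm''
        rw [hQ, hP0, SM13.updateM_M_ne P m eY hm'', SM13.updateM_M_ne P m e₀ hm'']
      · intro w hw
        rw [hEq, hM0] at hw
        rw [hEq, hMQ]
        exact hAbove_sub hw
    have hopt := SM13.DA_opt P0 (DA Q) htrans m
    rw [hEq, hM0] at hopt
    have hne0' : SM13.posN e₀ (DA P0 m) ≠ SM13.posN e₀ w₀ :=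
      fun hh => hne0 (SM13.posN_inj hh)
    have hmem0 : DA P0 m ∈ Above e₀ w₀ := by
      show SM13.posN e₀ (DA P0 m) < SM13.posN e₀ w₀
      omega
    rw [h0pu] at hmem0
    have hDF2 := SM13.dubins_freedman P m e₀
    have hw'eq : DA P0 m = w' := by
      rcases hmem0 with hmem | hmem
      · exfalso
        have hlt : SM13.posN (P.M m) (DA P0 m) < SM13.posN (P.M m) w₀ := hmem
        have hle : SM13.posN (P.M m) w₀ ≤ SM13.posN (P.M m) (DA P0 m) := hDF2
        omega
      · exact hmem
    have hDF3 := SM13.dubins_freedman Q m e₀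
    rw [SM13.updateM_updateM] at hDF3
    rw [hEq, hMQ, hw'eq] at hDF3
    have hw'mem : w' ∈ Above eY w₀ := by
      rw [hpu]
      exact Set.mem_union_right _ hw'Y
    have hlt2 : SM13.posN eY w' < SM13.posN eY w₀ := hw'mem
    omega
  have hle1 : SM13.posN (P.M m) w₀ ≤ SM13.posN (P.M m) (DA (P.updateM m eY) m) := hDF1
  have hne2 : SM13.posN (P.M m) (DA (P.updateM m eY) m) ≠ SM13.posN (P.M m) w₀ :=
    fun hh => hneq (SM13.posN_inj hh)
  show SM13.posN (P.M m) w₀ < SM13.posN (P.M m) (DA (P.updateM m eY) m)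
  omega
end

section
/- Any pair that blocks the DA matching of a two-for-one pair-manipulated profile with respect to the true preferences must contain the misreporting man m or the misreporting woman w: if (m', w') blocks μ' ∈ S_{≻'} with respect to ≻, then m' = m or w' = w. -/
/-- Any pair blocking (w.r.t. the true profile) a matching that is
stable for the pair-manipulated profile must contain the misreporting man `m` or
the misreporting woman `w`. -/
theorem pair_manipulation_block_contains_manipulator (n : ℕ) (P : Profile n)
    (m w : Fin n) (em ew : Fin n ≃ Fin n) (μ' : Fin n → Fin n)
    (hstab : Stable ((P.updateM m em).updateW w ew) μ')
    (m' w' : Fin n) (hblock : Blocks P μ' m' w') :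
    m' = m ∨ w' = w := by
  by_contra h
  push_neg at h
  obtain ⟨hm, hw⟩ := h
  apply hstab.2 m' w'
  obtain ⟨h1, m'', h2, h3⟩ := hblock
  refine ⟨?_, m'', h2, ?_⟩
  · simpa [Profile.updateM, Profile.updateW, Profile.mpref,
      Function.update_of_ne hm] using h1
  · simpa [Profile.updateM, Profile.updateW, Profile.wpref,
      Function.update_of_ne hw] using h3
end
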